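/- Suppose f ∈ C²(ℝ^d), f(0) = 0, ∇f(0) = 0, and H := ∇²f(0) is non-degenerate (all eigenvalues nonzero), has at least one negative eigenvalue, and has at least one positive eigenvalue. Let f^H(x) := (1/2) xᵀHx. Let 0 < ρ < 1 and 0 < ρ^H < ρ/4, and set U₂^H := ⋃_{x : f^H(x)=0} B(x, ρ^H‖x‖) and U₂ := ⋃_{x : f(x)=0} B(x, ρ‖x‖). Then there exists a neighborhood U' of 0 such that U₂^H ∩ U' ⊆ U₂ ∩ U'. -/

import Mathlib

/-! At a critical point `f = f^H + o(‖x‖²)`. If `f^H(x) = 0`, then moving along the gradient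
`Hx` of `f^H` gives `s f^H(x + s • Hx) ≥ s²‖Hx‖²/2` whenever `|s| ‖H‖ ≤ 1`, and since `H` is
invertible, `‖Hx‖ ≥ λ‖x‖` makes this dominate the Taylor error `o(‖x‖²)`. So for small `σ > 0`,
`f` changes sign on the segment `[x - σ • Hx, x + σ • Hx]` and vanishes at some `y` with
`‖y - x‖ ≤ c‖x‖`; a point within `ρ^H‖x‖` of `x` is then within `(ρ^H + c)‖x‖ ≤ ρ‖y‖` of `y`. -/
open Filter Topology RealInnerProductSpace

noncomputable section

/-- The Hessian `∇²f(x)` of `f` at `x`, as a continuous linear map. -/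
def hess (d : ℕ) (f : EuclideanSpace ℝ (Fin d) → ℝ) (x : EuclideanSpace ℝ (Fin d)) :
    EuclideanSpace ℝ (Fin d) →L[ℝ] EuclideanSpace ℝ (Fin d) :=
  fderiv ℝ (gradient f) x

/-- The quadratic form `f^H(x) = (1/2) xᵀ H x` associated with the Hessian `H = ∇²f(0)`. -/
def hessQuadForm (d : ℕ) (f : EuclideanSpace ℝ (Fin d) → ℝ) (x : EuclideanSpace ℝ (Fin d)) : ℝ :=
  (1 / 2 : ℝ) * ⟪hess d f 0 x, x⟫

section Taylor

variable {E F : Type*} [NormedAddCommGroup E] [NormedSpace ℝ E]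
  [NormedAddCommGroup F] [NormedSpace ℝ F]

theorem isLittleO_norm_sq_of_hasFDerivAt {g : E → F} {g' : E → E →L[ℝ] F}
    (hg0 : g 0 = 0) (hg : ∀ᶠ x in 𝓝 0, HasFDerivAt g (g' x) x) (hg' : g' =o[𝓝 0] id) :
    g =o[𝓝 0] fun x => ‖x‖ ^ 2 := by
  refine Asymptotics.IsLittleO.of_bound fun ε hε => ?_
  obtain ⟨δ, hδ, hball⟩ := Metric.eventually_nhds_iff_ball.1 (hg.and (hg'.def hε))
  filter_upwards [Metric.ball_mem_nhds 0 hδ] with w hw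
  have hsub : Metric.closedBall (0 : E) ‖w‖ ⊆ Metric.ball 0 δ :=
    Metric.closedBall_subset_ball (by simpa using hw)
  have hmv := (convex_closedBall (0 : E) ‖w‖).norm_image_sub_le_of_norm_hasFDerivWithin_le
    (f := g) (C := ε * ‖w‖)
    (fun x hx => (hball x (hsub hx)).1.hasFDerivWithinAt)
    (fun x hx => (hball x (hsub hx)).2.trans
      (mul_le_mul_of_nonneg_left (show ‖x‖ ≤ ‖w‖ by simpa using hx) hε.le))
    (Metric.mem_closedBall_self (norm_nonneg w))
    (show w ∈ Metric.closedBall (0 : E) ‖w‖ by simp)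
  simpa [hg0, pow_two, mul_assoc] using hmv

theorem hasFDerivAt_half_apply_self {B : E →L[ℝ] E →L[ℝ] F} (hB : ∀ v w, B v w = B w v)
    (x : E) : HasFDerivAt (fun y => (1 / 2 : ℝ) • B y y) (B x) x := by
  refine ((B.hasFDerivAt_of_bilinear (hasFDerivAt_id x) (hasFDerivAt_id x)).const_smul
    (1 / 2 : ℝ)).congr_fderiv ?_
  ext v
  simp [hB v x]
  module

theorem isLittleO_sub_taylor_two {f : E → F} {f' : E → E →L[ℝ] F} {B : E →L[ℝ] E →L[ℝ] F}
    (hf : ∀ᶠ x in 𝓝 0, HasFDerivAt f (f' x) x) (hf' : HasFDerivAt f' B 0)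
    (hB : ∀ v w, B v w = B w v) :
    (fun x => f x - f 0 - f' 0 x - (1 / 2 : ℝ) • B x x) =o[𝓝 0] fun x => ‖x‖ ^ 2 := by
  refine isLittleO_norm_sq_of_hasFDerivAt (g' := fun x => f' x - f' 0 - B x) (by simp) ?_ ?_
  · filter_upwards [hf] with x hx
    exact ((hx.sub_const _).sub (f' 0).hasFDerivAt).sub (hasFDerivAt_half_apply_self hB x)
  · have h := hasFDerivAt_iff_isLittleO_nhds_zero.1 hf'
    simp only [zero_add] at h
    exact h

end Taylor

theorem exists_pos_mul_norm_le_norm_of_injective {𝕜 E F : Type*} [NontriviallyNormedField 𝕜]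
    [CompleteSpace 𝕜] [NormedAddCommGroup E] [NormedSpace 𝕜 E] [FiniteDimensional 𝕜 E]
    [NormedAddCommGroup F] [NormedSpace 𝕜 F] (T : E →L[𝕜] F) (hT : Function.Injective T) :
    ∃ lam > 0, ∀ x, lam * ‖x‖ ≤ ‖T x‖ := by
  obtain ⟨K, hK0, hK⟩ := (T : E →ₗ[𝕜] F).exists_antilipschitzWith (LinearMap.ker_eq_bot.2 hT)
  refine ⟨(K : ℝ)⁻¹, by positivity, fun x => ?_⟩
  rw [inv_mul_le_iff₀ (by exact_mod_cast hK0)]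
  exact T.bound_of_antilipschitz hK x

section QuadraticForm

variable {E : Type*} [NormedAddCommGroup E] [InnerProductSpace ℝ E] {H : E →L[ℝ] E}

theorem inner_apply_add_smul_apply (hH : (H : E →ₗ[ℝ] E).IsSymmetric) {x : E}
    (hx : ⟪H x, x⟫ = 0) (s : ℝ) :
    ⟪H (x + s • H x), x + s • H x⟫ = 2 * s * ‖H x‖ ^ 2 + s ^ 2 * ⟪H (H x), H x⟫ := by
  have hsymm : ⟪H (H x), x⟫ = ‖H x‖ ^ 2 := by
    rw [← real_inner_self_eq_norm_sq]
    exact hH (H x) x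
  simp only [map_add, map_smul, inner_add_left, inner_add_right, real_inner_smul_left,
    real_inner_smul_right, hx, hsymm, real_inner_self_eq_norm_sq]
  ring

theorem sq_mul_norm_sq_le_mul_inner_apply_add_smul_apply (hH : (H : E →ₗ[ℝ] E).IsSymmetric)
    {x : E} (hx : ⟪H x, x⟫ = 0) {s : ℝ} (hs : |s| * ‖H‖ ≤ 1) :
    s ^ 2 * ‖H x‖ ^ 2 ≤ s * ⟪H (x + s • H x), x + s • H x⟫ := by
  have hHH : |⟪H (H x), H x⟫| ≤ ‖H‖ * ‖H x‖ ^ 2 :=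
    calc |⟪H (H x), H x⟫| ≤ ‖H (H x)‖ * ‖H x‖ := abs_real_inner_le_norm _ _
      _ ≤ ‖H‖ * ‖H x‖ * ‖H x‖ := by gcongr; exact H.le_opNorm _
      _ = ‖H‖ * ‖H x‖ ^ 2 := by ring
  have hcubic : |s ^ 3 * ⟪H (H x), H x⟫| ≤ s ^ 2 * ‖H x‖ ^ 2 :=
    calc |s ^ 3 * ⟪H (H x), H x⟫| = s ^ 2 * |s| * |⟪H (H x), H x⟫| := by
          rw [abs_mul, abs_pow, pow_succ, sq_abs]
      _ ≤ s ^ 2 * |s| * (‖H‖ * ‖H x‖ ^ 2) := by gcongr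
      _ = s ^ 2 * ‖H x‖ ^ 2 * (|s| * ‖H‖) := by ring
      _ ≤ s ^ 2 * ‖H x‖ ^ 2 := mul_le_of_le_one_right (by positivity) hs
  rw [inner_apply_add_smul_apply hH hx]
  linarith [neg_abs_le (s ^ 3 * ⟪H (H x), H x⟫)]

theorem eventually_nonneg_mul_apply_add_smul_apply {f : E → ℝ} {lam s : ℝ}
    (hfo : (fun x => f x - (1 / 2 : ℝ) * ⟪H x, x⟫) =o[𝓝 0] fun x => ‖x‖ ^ 2)
    (hH : (H : E →ₗ[ℝ] E).IsSymmetric) (hlam : 0 < lam) (hHlam : ∀ x, lam * ‖x‖ ≤ ‖H x‖)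
    (hs0 : s ≠ 0) (hs : |s| * ‖H‖ ≤ 1) :
    ∀ᶠ x in 𝓝 0, ⟪H x, x⟫ = 0 → 0 ≤ s * f (x + s • H x) := by
  -- with this tolerance the Taylor error is at most half of the lower bound `s²λ²‖x‖²`
  have hε : 0 < |s| * lam ^ 2 / 8 := by positivity
  have hw : Tendsto (fun x => x + s • H x) (𝓝 0) (𝓝 0) := by
    simpa using (show Continuous fun x : E => x + s • H x by fun_prop).tendsto 0
  filter_upwards [hw.eventually (hfo.def hε)] with x hx hQ
  set w := x + s • H x
  have hnorm : ‖w‖ ≤ 2 * ‖x‖ :=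
    calc ‖w‖ ≤ ‖x‖ + |s| * (‖H‖ * ‖x‖) := by
          grw [norm_add_le, norm_smul, Real.norm_eq_abs, H.le_opNorm]
      _ = ‖x‖ + |s| * ‖H‖ * ‖x‖ := by ring
      _ ≤ 2 * ‖x‖ := by nlinarith [norm_nonneg x]
  have hlow : s ^ 2 * lam ^ 2 * ‖x‖ ^ 2 ≤ s ^ 2 * ‖H x‖ ^ 2 := by
    rw [mul_assoc, ← mul_pow]; gcongr; exact hHlam x
  have herr : |s * (f w - (1 / 2 : ℝ) * ⟪H w, w⟫)| ≤ s ^ 2 * lam ^ 2 * ‖x‖ ^ 2 / 2 :=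
    calc |s * (f w - (1 / 2 : ℝ) * ⟪H w, w⟫)|
        ≤ |s| * (|s| * lam ^ 2 / 8 * ‖w‖ ^ 2) := by
          rw [abs_mul]; gcongr; simpa using hx
      _ ≤ |s| * (|s| * lam ^ 2 / 8 * (2 * ‖x‖) ^ 2) := by gcongr
      _ = s ^ 2 * lam ^ 2 * ‖x‖ ^ 2 / 2 := by rw [← sq_abs s]; ring
  have hmain := sq_mul_norm_sq_le_mul_inner_apply_add_smul_apply hH hQ hs
  linarith [neg_abs_le (s * (f w - (1 / 2 : ℝ) * ⟪H w, w⟫))]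

theorem eventually_exists_zero_near_of_inner_apply_self_eq_zero {f : E → ℝ} {lam c : ℝ}
    (hf : Continuous f)
    (hfo : (fun x => f x - (1 / 2 : ℝ) * ⟪H x, x⟫) =o[𝓝 0] fun x => ‖x‖ ^ 2)
    (hH : (H : E →ₗ[ℝ] E).IsSymmetric) (hlam : 0 < lam) (hHlam : ∀ x, lam * ‖x‖ ≤ ‖H x‖)
    (hc : 0 < c) (hc1 : c ≤ 1) :
    ∀ᶠ x in 𝓝 0, ⟪H x, x⟫ = 0 → ∃ y, f y = 0 ∧ ‖y - x‖ ≤ c * ‖x‖ := by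
  set σ := c / (‖H‖ + 1)
  have hσ : 0 < σ := by positivity
  have hσH : σ * ‖H‖ ≤ c := by
    rw [div_mul_eq_mul_div, div_le_iff₀ (by positivity)]
    nlinarith [norm_nonneg H]
  have hσ1 : |σ| * ‖H‖ ≤ 1 := by rw [abs_of_pos hσ]; linarith
  filter_upwards [eventually_nonneg_mul_apply_add_smul_apply hfo hH hlam hHlam hσ.ne' hσ1,
    eventually_nonneg_mul_apply_add_smul_apply (s := -σ) hfo hH hlam hHlam (neg_ne_zero.2 hσ.ne')
      (by rwa [abs_neg])] with x hplus hminus hQ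
  have hends : ∀ s, |s| = σ → x + s • H x ∈ Metric.closedBall x (c * ‖x‖) := fun s hs => by
    rw [Metric.mem_closedBall, dist_eq_norm, add_sub_cancel_left, norm_smul, Real.norm_eq_abs, hs]
    calc σ * ‖H x‖ ≤ σ * (‖H‖ * ‖x‖) := by gcongr; exact H.le_opNorm x
      _ ≤ c * ‖x‖ := by rw [← mul_assoc]; gcongr
  have hneg : f (x + (-σ) • H x) ≤ 0 := by nlinarith [hminus hQ]
  have hpos : 0 ≤ f (x + σ • H x) := by nlinarith [hplus hQ]
  obtain ⟨y, hyseg, hy⟩ := (convex_segment _ _).isPreconnected.intermediate_value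
    (left_mem_segment ℝ _ _) (right_mem_segment ℝ _ _) hf.continuousOn ⟨hneg, hpos⟩
  refine ⟨y, hy, ?_⟩
  have hy' := (convex_closedBall x _).segment_subset (hends (-σ) (by rw [abs_neg, abs_of_pos hσ]))
    (hends σ (abs_of_pos hσ)) hyseg
  rwa [Metric.mem_closedBall, dist_eq_norm] at hy'

end QuadraticForm

theorem exists_nhds_iUnion_ball_inter_subset {E : Type*} [SeminormedAddCommGroup E]
    {Z Z' : Set E} {ρ ρ' c : ℝ} (hρ : 0 ≤ ρ) (hρ' : ρ' < 1) (hc : ρ' + c ≤ ρ * (1 - c))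
    (hZ : ∀ᶠ x in 𝓝 0, x ∈ Z' → ∃ y, y ∈ Z ∧ ‖y - x‖ ≤ c * ‖x‖) :
    ∃ U ∈ 𝓝 (0 : E), (⋃ x ∈ Z', Metric.ball x (ρ' * ‖x‖)) ∩ U ⊆
      (⋃ y ∈ Z, Metric.ball y (ρ * ‖y‖)) ∩ U := by
  obtain ⟨r, hr, hball⟩ := Metric.eventually_nhds_iff_ball.1 hZ
  refine ⟨Metric.ball 0 (r * (1 - ρ')), Metric.ball_mem_nhds _ (by nlinarith), ?_⟩
  rintro z ⟨hz, hzU⟩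
  refine ⟨?_, hzU⟩
  simp only [Set.mem_iUnion, Metric.mem_ball, dist_eq_norm, sub_zero, exists_prop] at hz hzU ⊢
  obtain ⟨x, hx, hzx⟩ := hz
  have hxr : ‖x‖ < r := by
    have := norm_le_norm_add_norm_sub' x z
    nlinarith [norm_sub_rev x z]
  obtain ⟨y, hy, hyx⟩ := hball x (by simpa using hxr) hx
  refine ⟨y, hy, ?_⟩
  calc ‖z - y‖ ≤ ‖z - x‖ + ‖y - x‖ := by
        simpa [norm_sub_rev x y] using norm_sub_le_norm_sub_add_norm_sub z x y
    _ < (ρ' + c) * ‖x‖ := by linarith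
    _ ≤ ρ * ((1 - c) * ‖x‖) := by rw [← mul_assoc]; gcongr
    _ ≤ ρ * ‖y‖ := by gcongr; linarith [norm_sub_norm_le x y, norm_sub_rev x y]

section Hessian

variable {d : ℕ} {f : EuclideanSpace ℝ (Fin d) → ℝ} {x : EuclideanSpace ℝ (Fin d)}

theorem inner_hess_apply (v w : EuclideanSpace ℝ (Fin d)) :
    ⟪hess d f x v, w⟫ = fderiv ℝ (fderiv ℝ f) x v w := by
  have hgrad : gradient f =
      (InnerProductSpace.toDual ℝ (EuclideanSpace ℝ (Fin d))).symm ∘ fderiv ℝ f := rfl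
  rw [hess, hgrad, LinearIsometryEquiv.comp_fderiv]
  exact InnerProductSpace.toDual_symm_apply

theorem hess_isSymmetric (hf : ContDiffAt ℝ 2 f x) :
    (hess d f x : EuclideanSpace ℝ (Fin d) →ₗ[ℝ] EuclideanSpace ℝ (Fin d)).IsSymmetric :=
  fun v w => by
    rw [ContinuousLinearMap.coe_coe, real_inner_comm _ v, inner_hess_apply, inner_hess_apply]
    exact hf.isSymmSndFDerivAt (by simp) v w

theorem isLittleO_sub_hessQuadForm (hf : ContDiffAt ℝ 2 f 0) (hf0 : f 0 = 0)
    (hcrit : gradient f 0 = 0) :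
    (fun x => f x - hessQuadForm d f x) =o[𝓝 0] fun x => ‖x‖ ^ 2 := by
  have hderiv : ∀ᶠ x in 𝓝 0, HasFDerivAt f (fderiv ℝ f x) x :=
    (hf.eventually (by simp)).mono fun x hx => (hx.differentiableAt (by simp)).hasFDerivAt
  have hderiv2 : HasFDerivAt (fderiv ℝ f) (fderiv ℝ (fderiv ℝ f) 0) 0 :=
    ((hf.fderiv_right (m := 1) (by norm_num)).differentiableAt (by simp)).hasFDerivAt
  have hfd0 : fderiv ℝ f 0 = 0 := by simpa [gradient] using hcrit
  refine (isLittleO_sub_taylor_two hderiv hderiv2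
    (hf.isSymmSndFDerivAt (by simp))).congr_left fun x => ?_
  simp [hessQuadForm, inner_hess_apply, hf0, hfd0]

end Hessian

theorem quad_cone_subset_cone_general
    {d : ℕ} (f : EuclideanSpace ℝ (Fin d) → ℝ)
    (hf : ContDiff ℝ 2 f)
    (hf0 : f 0 = 0) (hcrit : gradient f 0 = 0)
    (hnd : ∀ μ : ℝ, Module.End.HasEigenvalue (hess d f 0).toLinearMap μ → μ ≠ 0)
    (ρ ρH : ℝ) (hρ0 : 0 < ρ) (hρ1 : ρ < 1) (hρH : ρH < ρ / 4) :
    ∃ U' ∈ 𝓝 (0 : EuclideanSpace ℝ (Fin d)),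
      (⋃ y ∈ {y : EuclideanSpace ℝ (Fin d) | hessQuadForm d f y = 0},
          Metric.ball y (ρH * ‖y‖)) ∩ U' ⊆
      (⋃ y ∈ {y : EuclideanSpace ℝ (Fin d) | f y = 0}, Metric.ball y (ρ * ‖y‖)) ∩ U' := by
  have hinj : Function.Injective (hess d f 0) := LinearMap.ker_eq_bot.1
    (((LinearMap.not_hasEigenvalue_zero_tfae _).out 0 4).1 fun h => hnd 0 h rfl)
  obtain ⟨lam, hlam, hHlam⟩ := exists_pos_mul_norm_le_norm_of_injective _ hinj
  have hnear := eventually_exists_zero_near_of_inner_apply_self_eq_zero (c := ρ / 4)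
    hf.continuous (isLittleO_sub_hessQuadForm hf.contDiffAt hf0 hcrit)
    (hess_isSymmetric hf.contDiffAt) hlam hHlam (by positivity) (by linarith)
  refine exists_nhds_iUnion_ball_inter_subset hρ0.le (by linarith) (c := ρ / 4) (by nlinarith) ?_
  filter_upwards [hnear] with x hx hQ
  exact hx (by simpa [hessQuadForm] using hQ)

/-- Near `0`, the conic neighborhood `U₂^H` of the zero set of the quadratic form
`f^H = (1/2) xᵀ(∇²f(0))x` (with aperture `ρ^H < ρ/4`) is contained in the corresponding
neighborhood `U₂` of the zero set of `f` (with aperture `ρ`). -/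
theorem quad_cone_subset_cone
    {d : ℕ} (f : EuclideanSpace ℝ (Fin d) → ℝ)
    (hf : ContDiff ℝ 2 f)
    (hf0 : f 0 = 0) (hcrit : gradient f 0 = 0)
    (hnd : ∀ μ : ℝ, Module.End.HasEigenvalue (hess d f 0).toLinearMap μ → μ ≠ 0)
    (hneg : ∃ μ < (0 : ℝ), Module.End.HasEigenvalue (hess d f 0).toLinearMap μ)
    (hpos : ∃ μ > (0 : ℝ), Module.End.HasEigenvalue (hess d f 0).toLinearMap μ)
    (ρ ρH : ℝ) (hρ0 : 0 < ρ) (hρ1 : ρ < 1) (hρH0 : 0 < ρH) (hρH : ρH < ρ / 4) :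
    ∃ U' ∈ 𝓝 (0 : EuclideanSpace ℝ (Fin d)),
      (⋃ y ∈ {y : EuclideanSpace ℝ (Fin d) | hessQuadForm d f y = 0},
          Metric.ball y (ρH * ‖y‖)) ∩ U' ⊆
      (⋃ y ∈ {y : EuclideanSpace ℝ (Fin d) | f y = 0}, Metric.ball y (ρ * ‖y‖)) ∩ U' :=
  quad_cone_subset_cone_general f hf hf0 hcrit hnd ρ ρH hρ0 hρ1 hρH
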